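/- Let l be an odd prime and let the dihedral group D_{2l} = ⟨σ, τ | σ² = τ^l = 1, στσ = τ^{-1}⟩ act on the F_l-vector space V of all functions f : Z/lZ → F_l by (τ·f)(x) = f(x-1) and (σ·f)(x) = f(-x). For each k = 0, 1, ..., l-1, let M_k ⊆ V be the subspace of functions given by a polynomial of degree at most k (that is, f ∈ M_k iff there exists a polynomial a(x) ∈ F_l[x] of degree ≤ k with f(i) = a(i) for all i ∈ Z/lZ). Then: (i) each M_k is a D_{2l}-submodule of V of dimension k+1 over F_l, and M_0 ⊆ M_1 ⊆ ... ⊆ M_{l-1} = V is a filtration; (ii) for each 1 ≤ k ≤ l-1 the quotient M_k/M_{k-1} is one-dimensional, with τ acting trivially and σ acting by multiplication by (-1)^k; and (iii) M_0 is the one-dimensional trivial module. -/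
import Mathlib


open Polynomial

/-- The filtration `M_k` of the `D_{2l}`-module `V` of all functions `ℤ/l → 𝔽_l`:
`M_k` consists of the functions given by a polynomial of degree at most `k`. -/
def Mfil (l k : ℕ) : Submodule (ZMod l) (ZMod l → ZMod l) where
  carrier := {f | ∃ a : Polynomial (ZMod l), a.natDegree ≤ k ∧ ∀ i : ZMod l, f i = a.eval i}
  add_mem' := by
    rintro f g ⟨a, ha, hfa⟩ ⟨b, hb, hgb⟩
    exact ⟨a + b, (Polynomial.natDegree_add_le a b).trans (max_le ha hb),
      fun i => by simp [Pi.add_apply, hfa i, hgb i]⟩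
  zero_mem' := ⟨0, by simp, fun i => by simp⟩
  smul_mem' := by
    rintro c f ⟨a, ha, hfa⟩
    exact ⟨c • a, (Polynomial.natDegree_smul_le c a).trans ha,
      fun i => by simp [Pi.smul_apply, hfa i]⟩

lemma natDegree_le_of_mem_degreeLT {R : Type*} [Semiring R] {k : ℕ}
    {p : R[X]} (hp : p ∈ degreeLT R (k+1)) : p.natDegree ≤ k := by
  by_cases h0 : p = 0
  · simp [h0]
  · exact Nat.lt_succ_iff.mp
      ((Polynomial.natDegree_lt_iff_degree_lt h0).mpr (Polynomial.mem_degreeLT.mp hp))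

lemma mem_degreeLT_of_natDegree_le {R : Type*} [Semiring R] {k : ℕ}
    {p : R[X]} (hp : p.natDegree ≤ k) : p ∈ degreeLT R (k+1) := by
  rw [Polynomial.mem_degreeLT]
  calc p.degree ≤ (p.natDegree : WithBot ℕ) := Polynomial.degree_le_natDegree
    _ ≤ (k : WithBot ℕ) := by exact_mod_cast hp
    _ < ((k+1 : ℕ) : WithBot ℕ) := by exact_mod_cast Nat.lt_succ_self k

lemma finrank_Mfil (l k : ℕ) [Fact l.Prime] (hk : k < l) :
    Module.finrank (ZMod l) (Mfil l k) = k + 1 := by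
  haveI : NeZero l := ⟨(Fact.out (p := l.Prime)).pos.ne'⟩
  let L : degreeLT (ZMod l) (k+1) →ₗ[ZMod l] Mfil l k :=
    { toFun := fun p => ⟨fun i => (p : (ZMod l)[X]).eval i,
        ⟨(p : (ZMod l)[X]), natDegree_le_of_mem_degreeLT p.2, fun _ => rfl⟩⟩
      map_add' := fun p q => by ext i; simp
      map_smul' := fun c p => by ext i; simp }
  have hinj : Function.Injective L := by
    intro p q h
    have h' : ∀ i : ZMod l, ((p : (ZMod l)[X]) - (q : (ZMod l)[X])).eval i = 0 := by
      intro i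
      have := congrArg (fun g => (g : Mfil l k).1 i) h
      simp only [L, LinearMap.coe_mk, AddHom.coe_mk] at this
      simp [this]
    have hdeg : ((p : (ZMod l)[X]) - (q : (ZMod l)[X])).natDegree < Fintype.card (ZMod l) := by
      rw [ZMod.card]
      exact lt_of_le_of_lt ((Polynomial.natDegree_sub_le _ _).trans
        (max_le (natDegree_le_of_mem_degreeLT p.2) (natDegree_le_of_mem_degreeLT q.2))) hk
    have := Polynomial.eq_zero_of_natDegree_lt_card_of_eval_eq_zero _
      Function.injective_id h' hdeg
    exact Subtype.ext (sub_eq_zero.mp this)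
  have hsurj : Function.Surjective L := by
    rintro ⟨f, a, ha, hfa⟩
    exact ⟨⟨a, mem_degreeLT_of_natDegree_le ha⟩, Subtype.ext (funext fun i => (hfa i).symm)⟩
  have e := LinearEquiv.ofBijective L ⟨hinj, hsurj⟩
  rw [← LinearEquiv.finrank_eq e, LinearEquiv.finrank_eq (Polynomial.degreeLTEquiv (ZMod l) (k+1)),
    Module.finrank_fin_fun]

lemma Mfil_mono (l : ℕ) {j k : ℕ} (h : j ≤ k) : Mfil l j ≤ Mfil l k := by
  rintro f ⟨a, ha, hfa⟩
  exact ⟨a, ha.trans h, hfa⟩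

lemma Mfil_top (l : ℕ) [Fact l.Prime] : Mfil l (l - 1) = ⊤ := by
  haveI : NeZero l := ⟨(Fact.out (p := l.Prime)).pos.ne'⟩
  ext f
  simp only [Submodule.mem_top, iff_true]
  refine ⟨Lagrange.interpolate Finset.univ id f, ?_, fun i =>
    (Lagrange.eval_interpolate_at_node f Function.injective_id.injOn (Finset.mem_univ i)).symm⟩
  have h := Lagrange.degree_interpolate_lt f (s := Finset.univ) Function.injective_id.injOn
  rw [Finset.card_univ, ZMod.card] at h
  by_cases h0 : Lagrange.interpolate Finset.univ id f = 0
  · simp [h0]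
  · exact Nat.le_pred_of_lt ((Polynomial.natDegree_lt_iff_degree_lt h0).mpr h)

lemma tau_mem {l k : ℕ} [Fact l.Prime] {f : ZMod l → ZMod l} (hf : f ∈ Mfil l k) :
    (fun x => f (x - 1)) ∈ Mfil l k := by
  obtain ⟨a, ha, hfa⟩ := hf
  refine ⟨a.comp (X - C 1), ?_, fun i => by simp [Polynomial.eval_comp, hfa (i - 1)]⟩
  rw [Polynomial.natDegree_comp, Polynomial.natDegree_X_sub_C, mul_one]
  exact ha

lemma sigma_mem {l k : ℕ} [Fact l.Prime] {f : ZMod l → ZMod l} (hf : f ∈ Mfil l k) :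
    (fun x => f (-x)) ∈ Mfil l k := by
  obtain ⟨a, ha, hfa⟩ := hf
  refine ⟨a.comp (-X), ?_, fun i => by simp [Polynomial.eval_comp, hfa (-i)]⟩
  rw [Polynomial.natDegree_comp, Polynomial.natDegree_neg, Polynomial.natDegree_X, mul_one]
  exact ha

lemma tau_diff_mem {l k : ℕ} [Fact l.Prime] {f : ZMod l → ZMod l} (hf : f ∈ Mfil l k) :
    ((fun x => f (x - 1)) - f) ∈ Mfil l (k - 1) := by
  obtain ⟨a, ha, hfa⟩ := hf
  refine ⟨a.comp (X - C 1) - a, ?_, fun i => by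
    simp [Pi.sub_apply, Polynomial.eval_comp, hfa (i - 1), hfa i]⟩
  by_cases h0 : a.natDegree = 0
  · obtain ⟨c, rfl⟩ := Polynomial.natDegree_eq_zero.mp h0
    simp
  · have ha0 : a ≠ 0 := fun h => h0 (by simp [h])
    have hnd : (a.comp (X - C 1)).natDegree = a.natDegree := by
      rw [Polynomial.natDegree_comp, Polynomial.natDegree_X_sub_C, mul_one]
    have hc0 : a.comp (X - C 1) ≠ 0 := fun h => h0 (by rw [← hnd, h, Polynomial.natDegree_zero])
    have hdeg : (a.comp (X - C 1)).degree = a.degree := by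
      rw [Polynomial.degree_eq_natDegree hc0, Polynomial.degree_eq_natDegree ha0, hnd]
    have hlc : (a.comp (X - C 1)).leadingCoeff = a.leadingCoeff := by
      rw [Polynomial.leadingCoeff_comp (by rw [Polynomial.natDegree_X_sub_C]; exact one_ne_zero),
        (Polynomial.monic_X_sub_C (1 : ZMod l)).leadingCoeff, one_pow, mul_one]
    have hlt := Polynomial.degree_sub_lt hdeg hc0 hlc
    by_cases hz : a.comp (X - C 1) - a = 0
    · simp only [hz, Polynomial.natDegree_zero]; exact Nat.zero_le _
    · exact Nat.le_pred_of_lt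
        ((Polynomial.natDegree_lt_natDegree hz (hlt.trans_eq hdeg)).trans_le ha)

lemma sigma_diff_mem {l k : ℕ} [Fact l.Prime] (hk : 1 ≤ k) {f : ZMod l → ZMod l}
    (hf : f ∈ Mfil l k) :
    ((fun x => f (-x)) - ((-1 : ZMod l) ^ k • f)) ∈ Mfil l (k - 1) := by
  obtain ⟨a, ha, hfa⟩ := hf
  refine ⟨a.comp (-X) - (-1 : ZMod l) ^ k • a, ?_, fun i => by
    simp [Pi.sub_apply, Pi.smul_apply, Polynomial.eval_comp, hfa (-i), hfa i, smul_eq_mul]⟩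
  have hndc : (a.comp (-X)).natDegree = a.natDegree := by
    rw [Polynomial.natDegree_comp, Polynomial.natDegree_neg, Polynomial.natDegree_X, mul_one]
  rcases lt_or_eq_of_le ha with hlt | heq
  · refine Nat.le_pred_of_lt (lt_of_le_of_lt (Polynomial.natDegree_sub_le _ _) ?_)
    exact max_lt (hndc.trans_lt hlt) ((Polynomial.natDegree_smul_le _ _).trans_lt hlt)
  · have hc1 : ((-1 : ZMod l) ^ k) ≠ 0 := pow_ne_zero _ (neg_ne_zero.mpr one_ne_zero)
    have ha0 : a ≠ 0 := fun h => by simp [h] at heq; omega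
    have hc0 : a.comp (-X) ≠ 0 := fun h => by
      rw [h, Polynomial.natDegree_zero] at hndc; omega
    set b := (-1 : ZMod l) ^ k • a with hb
    have hbC : b = C ((-1 : ZMod l) ^ k) * a := by rw [hb, Polynomial.smul_eq_C_mul]
    have hb0 : b ≠ 0 := by rw [hbC]; exact mul_ne_zero (by simpa using hc1) ha0
    have hndb : b.natDegree = a.natDegree := by rw [hbC, Polynomial.natDegree_C_mul hc1]
    have hdeg : (a.comp (-X)).degree = b.degree := by
      rw [Polynomial.degree_eq_natDegree hc0, Polynomial.degree_eq_natDegree hb0, hndc, hndb]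
    have hlc : (a.comp (-X)).leadingCoeff = b.leadingCoeff := by
      rw [Polynomial.comp_neg_X_leadingCoeff_eq, hbC, Polynomial.leadingCoeff_mul,
        Polynomial.leadingCoeff_C, heq]
    have hltd := Polynomial.degree_sub_lt hdeg hc0 hlc
    by_cases hz : a.comp (-X) - b = 0
    · simp only [hz, Polynomial.natDegree_zero]; exact Nat.zero_le _
    · refine Nat.le_pred_of_lt ?_
      have := Polynomial.natDegree_lt_natDegree hz hltd
      rw [hndc, heq] at this
      exact this

set_option synthInstance.maxHeartbeats 1000000 in
/-- The filtration of the `F_l`-representation `V = {f : ℤ/l → 𝔽_l}` of the dihedral group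
`D_{2l} = ⟨σ, τ | σ² = τ^l = 1, στσ = τ⁻¹⟩`, where `(τ·f)(x) = f(x-1)` and
`(σ·f)(x) = f(-x)`:  the submodules `M_k` of functions given by polynomials of degree
`≤ k` form a `D_{2l}`-stable filtration `M_0 ⊆ M_1 ⊆ ⋯ ⊆ M_{l-1} = V` with
`dim M_k = k+1`; each quotient `M_k/M_{k-1}` is one-dimensional with `τ` acting trivially
and `σ` acting by `(-1)^k`; and `M_0` is the one-dimensional trivial module. -/
theorem dihedral_filtration_facts (l : ℕ) (hl : l.Prime) (hlodd : Odd l) :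
    -- (i) each `M_k` is a `D_{2l}`-submodule of dimension `k+1`, and they filter `V`
    (∀ k : ℕ, k ≤ l - 1 →
      (∀ f ∈ Mfil l k, (fun x => f (x - 1)) ∈ Mfil l k) ∧
      (∀ f ∈ Mfil l k, (fun x => f (-x)) ∈ Mfil l k) ∧
      Module.finrank (ZMod l) (Mfil l k) = k + 1) ∧
    (∀ k : ℕ, Mfil l k ≤ Mfil l (k + 1)) ∧
    Mfil l (l - 1) = ⊤ ∧
    -- (ii) for `1 ≤ k ≤ l-1`, `M_k/M_{k-1}` is one-dimensional, `τ` acts trivially on it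
    -- and `σ` acts by multiplication by `(-1)^k`
    (∀ k : ℕ, 1 ≤ k → k ≤ l - 1 →
      Module.finrank (ZMod l)
        (Mfil l k ⧸ (Mfil l (k - 1)).comap (Mfil l k).subtype) = 1 ∧
      (∀ f ∈ Mfil l k, ((fun x => f (x - 1)) - f) ∈ Mfil l (k - 1)) ∧
      (∀ f ∈ Mfil l k,
        ((fun x => f (-x)) - ((-1 : ZMod l) ^ k • f)) ∈ Mfil l (k - 1))) ∧
    -- (iii) `M_0` is the one-dimensional trivial module
    (Module.finrank (ZMod l) (Mfil l 0) = 1 ∧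
      ∀ f ∈ Mfil l 0, (fun x => f (x - 1)) = f ∧ (fun x => f (-x)) = f) := by
  haveI : Fact l.Prime := ⟨hl⟩
  have hl2 : 2 ≤ l := hl.two_le
  refine ⟨fun k hk => ⟨fun f hf => tau_mem hf, fun f hf => sigma_mem hf,
      finrank_Mfil l k (by omega)⟩,
    fun k => Mfil_mono l (Nat.le_succ k), Mfil_top l, ?_, ?_⟩
  · intro k hk1 hk2
    refine ⟨?_, fun f hf => tau_diff_mem hf, fun f hf => sigma_diff_mem hk1 hf⟩
    have h1 : Module.finrank (ZMod l) (Mfil l k) = k + 1 := finrank_Mfil l k (by omega)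
    have h2 : Module.finrank (ZMod l) ((Mfil l (k - 1)).comap (Mfil l k).subtype) = k := by
      rw [LinearEquiv.finrank_eq (Submodule.comapSubtypeEquivOfLe (Mfil_mono l (by omega : k - 1 ≤ k))),
        finrank_Mfil l (k - 1) (by omega)]
      omega
    have h3 := Submodule.finrank_quotient_add_finrank
      ((Mfil l (k - 1)).comap (Mfil l k).subtype)
    omega
  · refine ⟨finrank_Mfil l 0 (by omega), ?_⟩
    rintro f ⟨a, ha, hfa⟩
    obtain ⟨c, rfl⟩ := Polynomial.natDegree_eq_zero.mp (Nat.le_zero.mp ha)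
    constructor <;> funext x <;> simp [hfa]
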